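/- Let Γ be a simple graph on a finite vertex type in which every vertex has degree 3, and suppose the only graph automorphism of Γ is the identity. Let u and v be adjacent vertices of Γ and let Γ' be the graph obtained from Γ by deleting the edge {u, v}. Then the only graph automorphism of Γ' is the identity. (Deleting one edge from an asymmetric trivalent graph yields an asymmetric graph.) -/
import Mathlib


/-- Deleting one edge from an asymmetric trivalent graph yields an
asymmetric graph: if `Γ` is a 3-regular simple graph on a finite vertex
type whose only automorphism is the identity, and `Γ'` is obtained from `Γ`
by deleting one edge `{u, v}`, then the only automorphism of `Γ'` is the
identity. -/
theorem deleteEdge_asymmetric {Vt : Type*} [Fintype Vt]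
    (Γ : SimpleGraph Vt) [DecidableRel Γ.Adj]
    (hreg : ∀ w : Vt, Γ.degree w = 3)
    (hasym : ∀ f : Γ ≃g Γ, ∀ w : Vt, f w = w)
    (u v : Vt) (huv : Γ.Adj u v) :
    ∀ f : Γ.deleteEdges {s(u, v)} ≃g Γ.deleteEdges {s(u, v)}, ∀ w : Vt, f w = w := by
  classical
  set Γ' := Γ.deleteEdges {s(u, v)} with hG'
  have hne : u ≠ v := huv.ne
  have hadj' : ∀ a b, Γ'.Adj a b ↔ Γ.Adj a b ∧ s(a, b) ≠ s(u, v) := by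
    intro a b
    simp [hG', SimpleGraph.deleteEdges_adj]
  -- neighbor sets
  have hns : ∀ w, w ≠ u → w ≠ v → Γ'.neighborSet w = Γ.neighborSet w := by
    intro w hwu hwv
    ext x
    simp only [SimpleGraph.mem_neighborSet, hadj' w x]
    constructor
    · rintro ⟨h, -⟩; exact h
    · intro h
      refine ⟨h, ?_⟩
      intro heq
      rw [Sym2.eq_iff] at heq
      rcases heq with ⟨h1, h2⟩ | ⟨h1, h2⟩
      · exact hwu h1
      · exact hwv h1
  have hnsu : Γ'.neighborSet u = Γ.neighborSet u \ {v} := by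
    ext x
    simp only [SimpleGraph.mem_neighborSet, hadj' u x, Set.mem_diff,
      Set.mem_singleton_iff]
    constructor
    · rintro ⟨h, hne2⟩
      refine ⟨h, ?_⟩
      rintro rfl; exact hne2 rfl
    · rintro ⟨h, hxv⟩
      refine ⟨h, ?_⟩
      intro heq
      rw [Sym2.eq_iff] at heq
      rcases heq with ⟨h1, h2⟩ | ⟨h1, h2⟩
      · exact hxv h2
      · exact hne h1
  have hnsv : Γ'.neighborSet v = Γ.neighborSet v \ {u} := by
    ext x
    simp only [SimpleGraph.mem_neighborSet, hadj' v x, Set.mem_diff,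
      Set.mem_singleton_iff]
    constructor
    · rintro ⟨h, hne2⟩
      refine ⟨h, ?_⟩
      rintro rfl; exact hne2 (Sym2.eq_swap)
    · rintro ⟨h, hxu⟩
      refine ⟨h, ?_⟩
      intro heq
      rw [Sym2.eq_iff] at heq
      rcases heq with ⟨h1, h2⟩ | ⟨h1, h2⟩
      · exact hne h1.symm
      · exact hxu h2
  -- cardinalities
  have hcard3 : ∀ w, (Γ.neighborSet w).ncard = 3 := by
    intro w
    have h := hreg w
    rw [SimpleGraph.degree, SimpleGraph.neighborFinset] at h
    rw [Set.ncard_eq_toFinset_card' ]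
    exact h
  have d3 : ∀ w, w ≠ u → w ≠ v → (Γ'.neighborSet w).ncard = 3 := by
    intro w h1 h2; rw [hns w h1 h2]; exact hcard3 w
  have du : (Γ'.neighborSet u).ncard = 2 := by
    rw [hnsu, Set.ncard_diff_singleton_of_mem (show v ∈ Γ.neighborSet u from huv),
      hcard3 u]
  have dv : (Γ'.neighborSet v).ncard = 2 := by
    rw [hnsv, Set.ncard_diff_singleton_of_mem (show u ∈ Γ.neighborSet v from huv.symm),
      hcard3 v]
  intro f
  -- f preserves ncard of neighbor sets
  have hpres : ∀ w, (Γ'.neighborSet (f w)).ncard = (Γ'.neighborSet w).ncard := by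
    intro w
    have e := f.mapNeighborSet w
    rw [← Nat.card_coe_set_eq, ← Nat.card_coe_set_eq]
    exact (Nat.card_congr e).symm
  have hmem : ∀ w, w = u ∨ w = v → f w = u ∨ f w = v := by
    intro w hw
    by_contra hc
    push_neg at hc
    have h3 := d3 (f w) hc.1 hc.2
    rw [hpres w] at h3
    rcases hw with rfl | rfl
    · rw [du] at h3; omega
    · rw [dv] at h3; omega
  have hfuv : (f u = u ∧ f v = v) ∨ (f u = v ∧ f v = u) := by
    have h1 := hmem u (Or.inl rfl)
    have h2 := hmem v (Or.inr rfl)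
    have hfne : f u ≠ f v := fun h => hne (f.injective h)
    rcases h1 with h1 | h1 <;> rcases h2 with h2 | h2
    · exact absurd (h1.trans h2.symm) hfne
    · exact Or.inl ⟨h1, h2⟩
    · exact Or.inr ⟨h1, h2⟩
    · exact absurd (h1.trans h2.symm) hfne
  -- sym2 equality transfer
  have hsym : ∀ a b : Vt, s(f a, f b) = s(u, v) ↔ s(a, b) = s(u, v) := by
    intro a b
    rw [Sym2.eq_iff, Sym2.eq_iff]
    rcases hfuv with ⟨h1, h2⟩ | ⟨h1, h2⟩
    · constructor
      · rintro (⟨ha, hb⟩ | ⟨ha, hb⟩)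
        · exact Or.inl ⟨f.injective (ha.trans h1.symm), f.injective (hb.trans h2.symm)⟩
        · exact Or.inr ⟨f.injective (ha.trans h2.symm), f.injective (hb.trans h1.symm)⟩
      · rintro (⟨rfl, rfl⟩ | ⟨rfl, rfl⟩)
        · exact Or.inl ⟨h1, h2⟩
        · exact Or.inr ⟨h2, h1⟩
    · constructor
      · rintro (⟨ha, hb⟩ | ⟨ha, hb⟩)
        · exact Or.inr ⟨f.injective (ha.trans h2.symm), f.injective (hb.trans h1.symm)⟩
        · exact Or.inl ⟨f.injective (ha.trans h1.symm), f.injective (hb.trans h2.symm)⟩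
      · rintro (⟨rfl, rfl⟩ | ⟨rfl, rfl⟩)
        · exact Or.inr ⟨h1, h2⟩
        · exact Or.inl ⟨h2, h1⟩
  -- Γ.Adj a b ↔ Γ'.Adj a b ∨ s(a,b) = s(u,v)
  have hGadj : ∀ a b, Γ.Adj a b ↔ (Γ'.Adj a b ∨ s(a, b) = s(u, v)) := by
    intro a b
    rw [hadj' a b]
    constructor
    · intro h
      by_cases he : s(a, b) = s(u, v)
      · exact Or.inr he
      · exact Or.inl ⟨h, he⟩
    · rintro (⟨h, -⟩ | he)
      · exact h
      · rw [Sym2.eq_iff] at he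
        rcases he with ⟨rfl, rfl⟩ | ⟨rfl, rfl⟩
        · exact huv
        · exact huv.symm
  -- build automorphism of Γ
  let g : Γ ≃g Γ := ⟨f.toEquiv, by
    intro a b
    show Γ.Adj (f a) (f b) ↔ Γ.Adj a b
    rw [hGadj, hGadj, f.map_adj_iff, hsym]⟩
  intro w
  exact hasym g w
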